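/- There exists a constant C > 0 such that for every maintenance instance on a path with n ≥ 2 jobs and every feasible preemptive schedule with busy time a, there exists a feasible non-preemptive schedule with busy time at most C · a · log n. (A non-preemptive schedule with cost O(log |E|) times the cost of an optimal preemptive schedule always exists.) -/

import Mathlib

open MeasureTheory Set
open scoped ENNReal

/-- Feasibility of a non-preemptive schedule of jobs on a path: job `i` starts at `s i`
within its window and is processed during `[s i, s i + p i]`. -/
def PathNPFeasible {ι : Type*} (r d p : ι → ℝ) (s : ι → ℝ) : Prop :=
  ∀ i, r i ≤ s i ∧ s i + p i ≤ d i

/-- Feasibility of a preemptive schedule of jobs on a path: job `i` is processed during the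
measurable set `S i ⊆ [r i, d i]` of measure `p i`. -/
def PathPFeasible {ι : Type*} (r d p : ι → ℝ) (S : ι → Set ℝ) : Prop :=
  ∀ i, MeasurableSet (S i) ∧ S i ⊆ Set.Icc (r i) (d i) ∧
    volume (S i) = ENNReal.ofReal (p i)

/-- The busy time of a non-preemptive schedule: the measure of the union of the
processing intervals (= the total disconnected time on a path). -/
noncomputable def npBusy {ι : Type*} (p : ι → ℝ) (s : ι → ℝ) : ℝ≥0∞ :=
  volume (⋃ i, Set.Icc (s i) (s i + p i))

/-- The busy time of a preemptive schedule: the measure of the union of the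
processing sets (= the total disconnected time on a path). -/
noncomputable def pBusy {ι : Type*} (S : ι → Set ℝ) : ℝ≥0∞ :=
  volume (⋃ i, S i)

/-!
Let `U` be the busy set of the preemptive schedule and `F x = |U ∩ (-∞, x]|`; every job
then satisfies `F r + p ≤ F d`. Jobs with `p ≤ a / n` start at their release date and cost
at most `a` in total. Every longer job has `q ≤ p ≤ 2q` for one of the `log₂ n + 1` scales
`q = a / 2^(k+1)`, and the first point where `F` reaches the first multiple of `q` above
`F r` lies in its window; starting the job next to that point keeps it within distance `2q`
of it. All jobs of scale `q` share the `2^(k+1) + 2` crossing points of the multiples of `q`,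
so each scale costs at most `8a`.
-/

noncomputable def busyUntil (μ : Measure ℝ) (U : Set ℝ) (x : ℝ) : ℝ :=
  (μ (U ∩ Iic x)).toReal

section BusyUntil

variable {μ : Measure ℝ} {U : Set ℝ}

theorem measure_inter_Iic_add_le [NullSingletonClass μ] {S : Set ℝ} {r d : ℝ} (hSU : S ⊆ U)
    (hS : S ⊆ Icc r d) (hrd : r ≤ d) : μ (U ∩ Iic r) + μ S ≤ μ (U ∩ Iic d) := by
  have hsplit := measure_inter_add_sdiff (μ := μ) (U ∩ Iic d) (measurableSet_Iic (a := r))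
  rw [inter_assoc, Iic_inter_Iic, min_eq_right hrd] at hsplit
  rw [← hsplit, ← measure_sdiff_null (s := S) (measure_singleton r)]
  refine add_le_add le_rfl (measure_mono ?_)
  rintro x ⟨hxS, hxr⟩
  have hx := hS hxS
  exact ⟨⟨hSU hxS, hx.2⟩, fun hle => hxr (le_antisymm hle hx.1)⟩

theorem monotone_busyUntil (hU : μ U ≠ ⊤) : Monotone (busyUntil μ U) := fun _ _ hxy =>
  ENNReal.toReal_mono (measure_ne_top_of_subset inter_subset_left hU)
    (measure_mono (inter_subset_inter_right _ (Iic_subset_Iic.2 hxy)))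

theorem busyUntil_le (hU : μ U ≠ ⊤) (x : ℝ) : busyUntil μ U x ≤ (μ U).toReal :=
  ENNReal.toReal_mono hU (measure_mono inter_subset_left)

theorem busyUntil_add_le [NullSingletonClass μ] (hU : μ U ≠ ⊤) {S : Set ℝ} {r d : ℝ}
    (hSU : S ⊆ U) (hS : S ⊆ Icc r d) (hrd : r ≤ d) :
    busyUntil μ U r + (μ S).toReal ≤ busyUntil μ U d := by
  have hfin : ∀ x, μ (U ∩ Iic x) ≠ ⊤ := fun _ =>
    measure_ne_top_of_subset inter_subset_left hU
  rw [busyUntil, busyUntil, ← ENNReal.toReal_add (hfin r) (measure_ne_top_of_subset hSU hU)]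
  exact ENNReal.toReal_mono (hfin d) (measure_inter_Iic_add_le hSU hS hrd)

end BusyUntil

theorem exists_start_near {r d p x : ℝ} (hp : 0 ≤ p) (hrd : r + p ≤ d) (hx : x ∈ Icc r d) :
    ∃ s, r ≤ s ∧ s + p ≤ d ∧ Icc s (s + p) ⊆ Icc (x - p) (x + p) := by
  refine ⟨max r (min x (d - p)), le_max_left _ _, ?_, Icc_subset_Icc ?_ ?_⟩
  · have : max r (min x (d - p)) ≤ d - p := max_le (by linarith) (min_le_right _ _)
    linarith
  · exact le_max_of_le_right (le_min (by linarith) (by linarith [hx.2]))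
  · have : max r (min x (d - p)) ≤ x := max_le hx.1 (min_le_left _ _)
    linarith

noncomputable def levelCrossing (F : ℝ → ℝ) (c : ℝ) : ℝ :=
  sInf {x | c ≤ F x}

theorem levelCrossing_mem_Icc {F : ℝ → ℝ} (hF : Monotone F) {r d c : ℝ} (hr : F r < c)
    (hd : c ≤ F d) : levelCrossing F c ∈ Icc r d := by
  have hlower : r ∈ lowerBounds {x | c ≤ F x} := fun x hx => (hF.reflect_lt (hr.trans_le hx)).le
  exact ⟨le_csInf ⟨d, hd⟩ hlower, csInf_le ⟨r, hlower⟩ hd⟩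

noncomputable def levelCover (F : ℝ → ℝ) (q : ℝ) (m : ℕ) : Set ℝ :=
  ⋃ j ∈ Finset.range (m + 2),
    Icc (levelCrossing F (j * q) - 2 * q) (levelCrossing F (j * q) + 2 * q)

theorem volume_levelCover_le (F : ℝ → ℝ) (q : ℝ) (m : ℕ) :
    volume (levelCover F q m) ≤ ENNReal.ofReal ((m + 2) * (4 * q)) := by
  refine (measure_biUnion_finset_le _ _).trans (le_of_eq ?_)
  have hlen : ∀ x : ℝ, volume (Icc (x - 2 * q) (x + 2 * q)) = ENNReal.ofReal (4 * q) :=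
    fun x => by rw [Real.volume_Icc]; ring_nf
  simp only [hlen, Finset.sum_const, Finset.card_range, nsmul_eq_mul]
  rw [ENNReal.ofReal_mul (by positivity : (0 : ℝ) ≤ m + 2), ← ENNReal.ofReal_natCast]
  push_cast
  rfl

theorem exists_start_mem_levelCover {F : ℝ → ℝ} (hF : Monotone F) {r d p q : ℝ} {m : ℕ}
    (hq : 0 < q) (hFr0 : 0 ≤ F r) (hFrm : F r ≤ m * q) (hqp : q ≤ p) (hpq : p ≤ 2 * q)
    (hrd : r + p ≤ d) (hFrd : F r + p ≤ F d) :
    ∃ s, r ≤ s ∧ s + p ≤ d ∧ Icc s (s + p) ⊆ levelCover F q m := by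
  set j := ⌊F r / q⌋₊ + 1
  have hjr : F r < j * q := by
    have := Nat.lt_floor_add_one (F r / q)
    rw [div_lt_iff₀ hq] at this
    simpa [j] using this
  have hjd : j * q ≤ F d := by
    have := Nat.floor_le (div_nonneg hFr0 hq.le)
    rw [le_div_iff₀ hq] at this
    simp only [j, Nat.cast_add, Nat.cast_one]
    linarith
  have hjm : j < m + 2 := by
    have : ⌊F r / q⌋₊ ≤ m := Nat.floor_le_of_le ((div_le_iff₀ hq).2 hFrm)
    omega
  obtain ⟨s, hrs, hsd, hsub⟩ :=
    exists_start_near (hq.le.trans hqp) hrd (levelCrossing_mem_Icc hF hjr hjd)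
  refine ⟨s, hrs, hsd, fun x hx => ?_⟩
  simp only [levelCover, mem_iUnion, Finset.mem_range]
  refine ⟨j, hjm, Icc_subset_Icc (by linarith) (by linarith) (hsub hx)⟩

theorem volume_biUnion_levelCover_le (F : ℝ → ℝ) {a : ℝ} (ha : 0 ≤ a) (K : ℕ) :
    volume (⋃ k ∈ Finset.range (K + 1), levelCover F (a / 2 ^ (k + 1)) (2 ^ (k + 1))) ≤
      ENNReal.ofReal (((K + 1 : ℕ) : ℝ) * (8 * a)) := by
  calc _ ≤ ∑ k ∈ Finset.range (K + 1),
        volume (levelCover F (a / 2 ^ (k + 1)) (2 ^ (k + 1))) := measure_biUnion_finset_le _ _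
  _ ≤ ∑ _k ∈ Finset.range (K + 1), ENNReal.ofReal (8 * a) := Finset.sum_le_sum fun k _ => by
        refine (volume_levelCover_le _ _ _).trans (ENNReal.ofReal_le_ofReal ?_)
        have ht : (2 : ℝ) ≤ 2 ^ (k + 1) := le_self_pow₀ one_le_two (Nat.succ_ne_zero k)
        have hqa : a / 2 ^ (k + 1) ≤ a / 2 := div_le_div_of_nonneg_left ha two_pos ht
        have hexpand : ((2 : ℝ) ^ (k + 1) + 2) * (4 * (a / 2 ^ (k + 1))) =
            4 * a + 8 * (a / 2 ^ (k + 1)) := by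
          field_simp
          ring
        push_cast
        linarith
  _ = ENNReal.ofReal (((K + 1 : ℕ) : ℝ) * (8 * a)) := by
        rw [Finset.sum_const, Finset.card_range, nsmul_eq_mul,
          ENNReal.ofReal_mul (Nat.cast_nonneg _), ENNReal.ofReal_natCast]

theorem volume_iUnion_Icc_min_le {ι : Type*} [Fintype ι] (x f : ι → ℝ) {a : ℝ}
    (ha : 0 ≤ a) :
    volume (⋃ i, Icc (x i) (x i + min (f i) (a / Fintype.card ι))) ≤ ENNReal.ofReal a := by
  set n := Fintype.card ι
  calc _ ≤ ∑ i, volume (Icc (x i) (x i + min (f i) (a / n))) := measure_iUnion_fintype_le _ _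
  _ ≤ ∑ _i : ι, ENNReal.ofReal (a / n) := Finset.sum_le_sum fun i _ => by
        rw [Real.volume_Icc, add_sub_cancel_left]
        exact ENNReal.ofReal_le_ofReal (min_le_right _ _)
  _ = ENNReal.ofReal (n * (a / n)) := by
        rw [Finset.sum_const, Finset.card_univ, nsmul_eq_mul,
          ENNReal.ofReal_mul (Nat.cast_nonneg _), ENNReal.ofReal_natCast]
  _ ≤ ENNReal.ofReal a := by
        refine ENNReal.ofReal_le_ofReal ?_
        rcases eq_or_ne (n : ℝ) 0 with hn | hn
        · rw [hn, zero_mul]; exact ha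
        · rw [mul_div_cancel₀ _ hn]

theorem exists_dyadic_scale {a p : ℝ} {n : ℕ} (hp : 0 < p) (hpa : p ≤ a) (hpn : a < p * n) :
    ∃ k ≤ Nat.log 2 n, a / 2 ^ (k + 1) ≤ p ∧ p ≤ 2 * (a / 2 ^ (k + 1)) := by
  set k := Nat.log 2 ⌊a / p⌋₊
  have hfloor : ⌊a / p⌋₊ ≠ 0 := (Nat.floor_pos.2 ((one_le_div hp).2 hpa)).ne'
  have hlow : (2 : ℝ) ^ k ≤ a / p := by
    calc (2 : ℝ) ^ k = (2 ^ k : ℕ) := by push_cast; rfl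
    _ ≤ ⌊a / p⌋₊ := by exact_mod_cast Nat.pow_log_le_self 2 hfloor
    _ ≤ a / p := Nat.floor_le (div_pos (hp.trans_le hpa) hp).le
  have hup : a / p < 2 ^ (k + 1) := by
    calc a / p < ⌊a / p⌋₊ + 1 := Nat.lt_floor_add_one _
    _ ≤ (2 ^ (k + 1) : ℕ) := by exact_mod_cast Nat.lt_pow_succ_log_self one_lt_two _
    _ = 2 ^ (k + 1) := by push_cast; rfl
  refine ⟨k, Nat.log_mono_right (Nat.floor_le_of_le ?_), ?_, ?_⟩
  · exact (div_le_iff₀ hp).2 (by linarith)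
  · rw [div_le_iff₀ (by positivity), mul_comm]
    exact (div_le_iff₀ hp).1 hup.le
  · rw [pow_succ, ← div_div, mul_div_cancel₀ _ two_ne_zero, le_div_iff₀ (by positivity),
      mul_comm]
    exact (le_div_iff₀ hp).1 hlow

theorem exists_pathNPFeasible_npBusy_le {ι : Type*} [Fintype ι] {r d p : ι → ℝ}
    {F : ℝ → ℝ} {a : ℝ} (hF : Monotone F) (hF0 : ∀ x, 0 ≤ F x) (hFa : ∀ x, F x ≤ a)
    (hrd : ∀ i, r i + p i ≤ d i) (hFrd : ∀ i, F (r i) + p i ≤ F (d i)) :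
    ∃ s, PathNPFeasible r d p s ∧
      npBusy p s ≤ ENNReal.ofReal ((9 + 8 * Nat.log 2 (Fintype.card ι)) * a) := by
  set n := Fintype.card ι
  set K := Nat.log 2 n
  set q : ℕ → ℝ := fun k => a / 2 ^ (k + 1)
  set small := ⋃ i, Icc (r i) (r i + min (p i) (a / n))
  set large := ⋃ k ∈ Finset.range (K + 1), levelCover F (q k) (2 ^ (k + 1))
  have ha : 0 ≤ a := (hF0 0).trans (hFa 0)
  have hcover : ∀ i, ∃ s, r i ≤ s ∧ s + p i ≤ d i ∧
      Icc s (s + p i) ⊆ small ∪ large := by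
    intro i
    rcases le_or_gt (p i * n) a with hsmall | hlarge
    · refine ⟨r i, le_rfl, hrd i, subset_union_of_subset_left ?_ _⟩
      have hn : (0 : ℝ) < n := Nat.cast_pos.2 (Fintype.card_pos_iff.2 ⟨i⟩)
      rw [← min_eq_left ((le_div_iff₀ hn).2 hsmall)]
      exact subset_iUnion (fun i => Icc (r i) (r i + min (p i) (a / n))) i
    · have hp : 0 < p i := by nlinarith [(Nat.cast_nonneg n : (0 : ℝ) ≤ n)]
      have hpa : p i ≤ a := by linarith [hFrd i, hF0 (r i), hFa (d i)]
      obtain ⟨k, hkK, hqp, hpq⟩ := exists_dyadic_scale hp hpa hlarge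
      have hFr : F (r i) ≤ ((2 ^ (k + 1) : ℕ) : ℝ) * q k := by
        push_cast
        rw [mul_div_cancel₀ _ (by positivity)]
        exact hFa _
      obtain ⟨s, hrs, hsd, hsub⟩ := exists_start_mem_levelCover hF
        (div_pos (hp.trans_le hpa) (by positivity)) (hF0 _) hFr hqp hpq (hrd i) (hFrd i)
      refine ⟨s, hrs, hsd, hsub.trans (subset_union_of_subset_right ?_ _)⟩
      exact subset_biUnion_of_mem (u := fun k => levelCover F (q k) (2 ^ (k + 1)))
        (Finset.mem_coe.2 (Finset.mem_range.2 (Nat.lt_succ_of_le hkK)))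
  choose s hrs hsd hsub using hcover
  refine ⟨s, fun i => ⟨hrs i, hsd i⟩, ?_⟩
  calc npBusy p s ≤ volume (small ∪ large) := measure_mono (iUnion_subset hsub)
  _ ≤ volume small + volume large := measure_union_le _ _
  _ ≤ ENNReal.ofReal a + ENNReal.ofReal (((K + 1 : ℕ) : ℝ) * (8 * a)) :=
        add_le_add (volume_iUnion_Icc_min_le r p ha) (volume_biUnion_levelCover_le F ha K)
  _ = ENNReal.ofReal ((9 + 8 * K) * a) := by
        rw [← ENNReal.ofReal_add ha (by positivity)]
        push_cast
        ring_nf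

theorem nine_add_eight_mul_natLog_le_logb {n : ℕ} (hn : 2 ≤ n) :
    (9 + 8 * Nat.log 2 n : ℝ) ≤ 17 * Real.logb 2 n := by
  have hlog := Real.natLog_le_logb n 2
  have hone : 1 ≤ Real.logb 2 n :=
    (Real.le_logb_iff_rpow_le one_lt_two (by positivity)).2 (by exact_mod_cast hn)
  push_cast at hlog
  linarith

/-- **Lemma 1 (upper bound on the power of preemption on a path).** There is a constant
`C > 0` such that for every maintenance instance on a path with `n ≥ 2` jobs and every
feasible preemptive schedule of busy time `a`, there is a feasible non-preemptive schedule of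
busy time at most `C · a · log n`. -/
theorem power_of_preemption_upper :
    ∃ C : ℝ, 0 < C ∧
      ∀ (n : ℕ), 2 ≤ n → ∀ r d p : Fin n → ℝ,
        (∀ i, 0 ≤ p i) → (∀ i, r i + p i ≤ d i) →
        ∀ S : Fin n → Set ℝ, PathPFeasible r d p S →
        ∀ a : ℝ, pBusy S = ENNReal.ofReal a →
        ∃ s : Fin n → ℝ, PathNPFeasible r d p s ∧
          npBusy p s ≤ ENNReal.ofReal (C * a * Real.log n) := by
  refine ⟨17 / Real.log 2, by positivity, ?_⟩
  intro n hn r d p hp hrd S hS a ha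
  set U := ⋃ i, S i
  have hUa : volume U = ENNReal.ofReal a := ha
  have hU : volume U ≠ ⊤ := hUa ▸ ENNReal.ofReal_ne_top
  have hFrd : ∀ i, busyUntil volume U (r i) + p i ≤ busyUntil volume U (d i) := fun i => by
    have := busyUntil_add_le hU (subset_iUnion S i) (hS i).2.1 (by linarith [hp i, hrd i])
    rwa [(hS i).2.2, ENNReal.toReal_ofReal (hp i)] at this
  obtain ⟨s, hs, hbusy⟩ := exists_pathNPFeasible_npBusy_le (monotone_busyUntil hU)
    (fun _ => ENNReal.toReal_nonneg) (busyUntil_le hU) hrd hFrd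
  refine ⟨s, hs, hbusy.trans ?_⟩
  rw [Fintype.card_fin, hUa, ENNReal.toReal_ofReal', ENNReal.ofReal_le_ofReal_iff']
  rcases le_or_gt 0 a with ha0 | ha0
  · left
    calc (9 + 8 * Nat.log 2 n : ℝ) * max a 0 ≤ 17 * Real.logb 2 n * a := by
          rw [max_eq_left ha0]
          exact mul_le_mul_of_nonneg_right (nine_add_eight_mul_natLog_le_logb hn) ha0
    _ = 17 / Real.log 2 * a * Real.log n := by rw [Real.logb]; ring
  · right
    rw [max_eq_right ha0.le, mul_zero]
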